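/- Consider a directed acyclic graph G = (S, A) with a unique source s₀, terminal states X ⊆ S, a positive state flow F : S → (0,∞), forward policy P_F(·|s) and backward policy P_B(·|s') (probability distributions over children and parents respectively). If detailed balance holds, F(s) P_F(s'|s) = F(s') P_B(s|s') for every edge (s → s'), then for every complete trajectory τ = (s₀ → s₁ → ⋯ → s_n) with s_n ∈ X: F(s₀) ∏_{t=1}^n P_F(s_t|s_{t−1}) = F(s_n) ∏_{t=1}^n P_B(s_{t−1}|s_t), i.e., detailed balance implies trajectory balance with Z = F(s₀) and R(s_n) = F(s_n). -/
import Mathlib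


open Finset

/-- Detailed balance implies trajectory balance along any complete trajectory
in a DAG: `F(s₀) ∏ P_F = F(s_n) ∏ P_B`. Here `PF s s'` denotes `P_F(s'|s)`
(forward transition probability from `s` to its child `s'`) and `PB s' s`
denotes `P_B(s|s')` (backward probability of parent `s` given `s'`). -/
theorem stmt_9 {S : Type*} [Fintype S]
    (A : S → S → Prop) (s₀ : S) (X : Set S)
    (F : S → ℝ) (PF PB : S → S → ℝ)
    (hFpos : ∀ s, 0 < F s)
    (hPFnn : ∀ s s', 0 ≤ PF s s') (hPBnn : ∀ s s', 0 ≤ PB s s')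
    (hdb : ∀ s s', A s s' → F s * PF s s' = F s' * PB s' s)
    (n : ℕ) (τ : ℕ → S)
    (hτ0 : τ 0 = s₀) (hτn : τ n ∈ X)
    (hedges : ∀ t < n, A (τ t) (τ (t + 1))) :
    F (τ 0) * ∏ t ∈ Finset.range n, PF (τ t) (τ (t + 1))
      = F (τ n) * ∏ t ∈ Finset.range n, PB (τ (t + 1)) (τ t) := by
  clear hτn hτ0
  induction n with
  | zero => simp
  | succ m ih =>
    have hstep := hdb (τ m) (τ (m+1)) (hedges m (Nat.lt_succ_self m))
    have ihm := ih (fun t ht => hedges t (ht.trans (Nat.lt_succ_self m)))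
    rw [Finset.prod_range_succ, Finset.prod_range_succ, ← mul_assoc, ihm,
      mul_assoc, mul_comm (∏ t ∈ Finset.range m, PB (τ (t + 1)) (τ t)), ← mul_assoc,
      hstep]
    ring
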